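/- For n ≥ 2 and d = 2, with u = n+1 and λ^i, ν, m_λ as above: m_λ ≠ 0 if and only if either (a) ν_{λ^n} = 1 and ν_{λ^j} = 0 for all j < n, in which case m_λ = 1, or (b) ν_{λ^1} = 1 and ν_{λ^j} = 0 for all j > 1, in which case m_λ = (-1)^{n-1}. Moreover case (a) holds if and only if λ_{n-1} ≥ n, λ_i - n is even for all i ≤ n-1, and λ_n ≤ n-1 or λ_n - n is even; case (b) holds if and only if λ_n ≥ n+1 and λ_i - n - 1 is even for all i. -/

import Mathlib

/-- For a weight `l = (l_1 ≥ ⋯ ≥ l_n)` and `1 ≤ i ≤ n`, the weight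
`l^i = (l_1+1-u, …, l_{i-1}+1-u, l_{i+1}-u, …, l_n-u) ∈ ℤ^{n-1}` (0-indexed here). -/
def lamb (n : ℕ) (u : ℤ) (l : Fin n → ℤ) (i : Fin n) : Fin (n - 1) → ℤ :=
  fun j =>
    if (j : ℕ) < (i : ℕ) then l ⟨j, by have := j.isLt; omega⟩ + 1 - u
    else l ⟨(j : ℕ) + 1, by have := j.isLt; omega⟩ - u

open scoped Classical in
/-- `ν_μ = 1` if `μ` is weakly decreasing with all entries nonnegative and even,
and `ν_μ = 0` otherwise (the `d = 2` stable plethysm multiplicity). -/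
noncomputable def nu {m : ℕ} (μ : Fin m → ℤ) : ℕ :=
  if Antitone μ ∧ ∀ j, 0 ≤ μ j ∧ Even (μ j) then 1 else 0

/-- `m_λ = ∑_{i=1}^n (-1)^{n-i} ν_{λ^i}`, with `u = n+1` (the `d = 2` case). -/
noncomputable def mlam (n : ℕ) (l : Fin n → ℤ) : ℤ :=
  ∑ i : Fin n, (-1 : ℤ) ^ (n - 1 - (i : ℕ)) * nu (lamb n ((n : ℤ) + 1) l i)

/-- Case (a): `ν_{λ^n} = 1` and `ν_{λ^j} = 0` for all `j < n`. -/
noncomputable def caseA (n : ℕ) (hn : 2 ≤ n) (l : Fin n → ℤ) : Prop :=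
  nu (lamb n ((n : ℤ) + 1) l ⟨n - 1, by omega⟩) = 1 ∧
    ∀ j : Fin n, (j : ℕ) < n - 1 → nu (lamb n ((n : ℤ) + 1) l j) = 0

/-- Case (b): `ν_{λ^1} = 1` and `ν_{λ^j} = 0` for all `j > 1`. -/
noncomputable def caseB (n : ℕ) (hn : 2 ≤ n) (l : Fin n → ℤ) : Prop :=
  nu (lamb n ((n : ℤ) + 1) l ⟨0, by omega⟩) = 1 ∧
    ∀ j : Fin n, 0 < (j : ℕ) → nu (lamb n ((n : ℤ) + 1) l j) = 0

/-!
Write `ν_i` for `ν_{λ^i}`. As `λ` is antitone so is every `λ^i`, hence `ν_i = 1` exactly when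
the last entry of `λ^i` is nonnegative, `λ_j - n` is even for `j < i` and odd for `j > i`. Two
indices `i < k` with `ν_i = ν_k = 1` are therefore adjacent (`λ_{i+1}` would need both
parities), so the support of `ν` is one index or two adjacent ones, and in the latter case the two
terms of `m_λ` cancel. An interior index cannot be alone in the support: according to the parity
of `λ_i - n`, `ν_{i+1}` or `ν_{i-1}` is `1` as well. Hence `m_λ ≠ 0` forces the support to be
`{n}` or `{1}`, and the explicit form of the two cases is the parity criterion read off at
`n, n - 1` and at `1, 2`.
-/

section AlternatingSum

variable {n : ℕ} (f : Fin n → ℕ)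

lemma altSum_eq_of_support_eq_singleton {i : Fin n} (hi : f i = 1)
    (hf : ∀ j, j ≠ i → f j = 0) :
    ∑ j : Fin n, (-1 : ℤ) ^ (n - 1 - (j : ℕ)) * f j = (-1) ^ (n - 1 - (i : ℕ)) := by
  rw [Finset.sum_eq_single i (fun j _ hj => by simp [hf j hj]) (by simp), hi]
  simp

lemma altSum_eq_zero_of_support_eq_pair {i k : Fin n} (hik : (k : ℕ) = i + 1)
    (hi : f i = 1) (hk : f k = 1) (hf : ∀ j, j ≠ i → j ≠ k → f j = 0) :
    ∑ j : Fin n, (-1 : ℤ) ^ (n - 1 - (j : ℕ)) * f j = 0 := by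
  have hne : i ≠ k := fun h => by rw [h] at hik; omega
  rw [Finset.sum_eq_add i k hne (fun j _ hj => by simp [hf j hj.1 hj.2]) (by simp) (by simp),
    hi, hk, show n - 1 - (i : ℕ) = n - 1 - (k : ℕ) + 1 by omega, pow_succ]
  ring

variable {f}

lemma altSum_eq_zero_of_lt (hf01 : ∀ i, f i = 0 ∨ f i = 1)
    (hadj : ∀ i k : Fin n, i < k → f i = 1 → f k = 1 → (k : ℕ) = i + 1)
    {i k : Fin n} (hik : i < k) (hi : f i = 1) (hk : f k = 1) :
    ∑ j : Fin n, (-1 : ℤ) ^ (n - 1 - (j : ℕ)) * f j = 0 := by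
  have hk' := hadj i k hik hi hk
  refine altSum_eq_zero_of_support_eq_pair f hk' hi hk fun j hji hjk => ?_
  refine (hf01 j).resolve_right fun hj => ?_
  rcases lt_trichotomy j i with h | rfl | h
  · have := hadj j i h hj hi
    have := hadj j k (h.trans hik) hj hk
    omega
  · exact hji rfl
  · exact hjk (Fin.ext (by rw [hk', hadj i j h hi hj]))

lemma exists_support_eq_singleton_of_altSum_ne_zero (hf01 : ∀ i, f i = 0 ∨ f i = 1)
    (hadj : ∀ i k : Fin n, i < k → f i = 1 → f k = 1 → (k : ℕ) = i + 1)
    (hsum : ∑ j : Fin n, (-1 : ℤ) ^ (n - 1 - (j : ℕ)) * f j ≠ 0) :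
    ∃ i, f i = 1 ∧ ∀ j, j ≠ i → f j = 0 := by
  obtain ⟨i, hi⟩ : ∃ i, f i = 1 := by
    by_contra! h
    exact hsum (Finset.sum_eq_zero fun j _ => by simp [(hf01 j).resolve_right (h j)])
  refine ⟨i, hi, fun j hji => (hf01 j).resolve_right fun hj => hsum ?_⟩
  rcases lt_or_gt_of_ne hji with h | h
  · exact altSum_eq_zero_of_lt hf01 hadj h hj hi
  · exact altSum_eq_zero_of_lt hf01 hadj h hi hj

end AlternatingSum

lemma nu_eq_zero_or_one {m : ℕ} (μ : Fin m → ℤ) : nu μ = 0 ∨ nu μ = 1 := by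
  unfold nu; split_ifs <;> simp

lemma nu_eq_one_iff_of_antitone {m : ℕ} {μ : Fin m → ℤ} (hμ : Antitone μ) {last : Fin m}
    (hlast : IsTop last) : nu μ = 1 ↔ 0 ≤ μ last ∧ ∀ j, Even (μ j) := by
  unfold nu
  split_ifs with h
  · simpa using ⟨(h.2 last).1, fun j => (h.2 j).2⟩
  · simp only [false_iff, not_and]
    intro h0 heven
    exact h ⟨hμ, fun j => ⟨h0.trans (hμ (hlast j)), heven j⟩⟩

section Lamb

variable {n : ℕ} {u : ℤ} {l : Fin n → ℤ} {i : Fin n}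

lemma lamb_of_lt (j : Fin (n - 1)) (h : (j : ℕ) < i) :
    lamb n u l i j = l ⟨j, by omega⟩ + 1 - u :=
  if_pos h

lemma lamb_of_ge (j : Fin (n - 1)) (h : (i : ℕ) ≤ j) :
    lamb n u l i j = l ⟨j + 1, by omega⟩ - u :=
  if_neg (not_lt.2 h)

lemma antitone_lamb (hl : Antitone l) : Antitone (lamb n u l i) := by
  intro a b hab
  have hab : (a : ℕ) ≤ b := hab
  have hl' : ∀ p q (hp : p < n) (hq : q < n), p ≤ q → l ⟨q, hq⟩ ≤ l ⟨p, hp⟩ :=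
    fun p q hp hq hpq => hl (Fin.mk_le_mk.2 hpq)
  simp only [lamb]
  split_ifs
  · linarith [hl' a b (by omega) (by omega) hab]
  · omega
  · linarith [hl' a (b + 1) (by omega) (by omega) (by omega)]
  · linarith [hl' (a + 1) (b + 1) (by omega) (by omega) (by omega)]

lemma forall_even_lamb_iff :
    (∀ j, Even (lamb n u l i j)) ↔
      (∀ j : Fin n, (j : ℕ) < i → Even (l j + 1 - u)) ∧
        ∀ j : Fin n, (i : ℕ) < j → Even (l j - u) := by
  constructor
  · intro h
    refine ⟨fun j hj => ?_, fun j hj => ?_⟩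
    · simpa [lamb_of_lt ⟨j, by omega⟩ hj] using h ⟨j, by omega⟩
    · have hj' : (i : ℕ) ≤ j - 1 := by omega
      simpa [lamb_of_ge ⟨j - 1, by omega⟩ hj', Nat.sub_add_cancel (Nat.one_le_of_lt hj)]
        using h ⟨j - 1, by omega⟩
  · rintro ⟨h1, h2⟩ j
    by_cases hj : (j : ℕ) < i
    · rw [lamb_of_lt _ hj]
      exact h1 _ hj
    · rw [lamb_of_ge _ (by omega)]
      exact h2 _ (by simp only; omega)

lemma lamb_le_lamb_of_val_eq_succ (hl : Antitone l) {k : Fin n} (hik : (k : ℕ) = i + 1)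
    (j : Fin (n - 1)) : lamb n u l i j ≤ lamb n u l k j := by
  simp only [lamb, hik]
  split_ifs
  · rfl
  · omega
  · have : (⟨j, by omega⟩ : Fin n) ≤ ⟨j + 1, by omega⟩ := Fin.mk_le_mk.2 (Nat.le_succ j)
    linarith [hl this]
  · rfl

end Lamb

section TwistedWeights

variable {n : ℕ} {l : Fin n → ℤ}

lemma nu_lamb_eq_one_iff (hn : 2 ≤ n) (hl : Antitone l) (i : Fin n) :
    nu (lamb n (n + 1) l i) = 1 ↔
      0 ≤ lamb n (n + 1) l i ⟨n - 2, by omega⟩ ∧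
        (∀ j : Fin n, (j : ℕ) < i → Even (l j - n)) ∧
        ∀ j : Fin n, (i : ℕ) < j → Even (l j - n - 1) := by
  rw [nu_eq_one_iff_of_antitone (antitone_lamb hl) (last := ⟨n - 2, by omega⟩)
    (fun j => Fin.le_def.2 (by simp only; omega)), forall_even_lamb_iff]
  simp only [add_sub_add_right_eq_sub]
  simp only [sub_add_eq_sub_sub]

lemma nu_lamb_eq_one_iff_of_lt (hn : 2 ≤ n) (hl : Antitone l) {i : Fin n}
    (hi : (i : ℕ) < n - 1) :
    nu (lamb n (n + 1) l i) = 1 ↔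
      (n : ℤ) + 1 ≤ l ⟨n - 1, Nat.sub_one_lt_of_lt hn⟩ ∧
        (∀ j : Fin n, (j : ℕ) < i → Even (l j - n)) ∧
        ∀ j : Fin n, (i : ℕ) < j → Even (l j - n - 1) := by
  rw [nu_lamb_eq_one_iff hn hl, lamb_of_ge _ (by simp only; omega)]
  simp only [show n - 2 + 1 = n - 1 by omega, sub_nonneg]

lemma nu_lamb_last_eq_one_iff (hn : 2 ≤ n) (hl : Antitone l) :
    nu (lamb n (n + 1) l ⟨n - 1, Nat.sub_one_lt_of_lt hn⟩) = 1 ↔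
      (n : ℤ) ≤ l ⟨n - 2, Nat.sub_lt_self two_pos hn⟩ ∧
        ∀ j : Fin n, (j : ℕ) < n - 1 → Even (l j - n) := by
  rw [nu_lamb_eq_one_iff hn hl, lamb_of_lt _ (by simp only; omega)]
  simp only [add_sub_add_right_eq_sub, sub_nonneg]
  exact and_congr_right fun _ => and_iff_left fun j hj => absurd hj (by omega)

lemma val_eq_succ_of_nu_lamb_eq_one (hn : 2 ≤ n) (hl : Antitone l) {i k : Fin n}
    (hik : i < k)    (hi : nu (lamb n (n + 1) l i) = 1) (hk : nu (lamb n (n + 1) l k) = 1) :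
    (k : ℕ) = i + 1 := by
  by_contra hne
  have hlt : (i : ℕ) + 1 < k := by omega
  have hodd := ((nu_lamb_eq_one_iff hn hl i).1 hi).2.2 ⟨i + 1, by omega⟩ (by simp only; omega)
  have heven := ((nu_lamb_eq_one_iff hn hl k).1 hk).2.1 ⟨i + 1, by omega⟩ (by simp only; omega)
  exact Int.even_sub_one.1 hodd heven

lemma nu_lamb_succ_eq_one_iff (hn : 2 ≤ n) (hl : Antitone l) {i k : Fin n}
    (hik : (k : ℕ) = i + 1) (hi : nu (lamb n (n + 1) l i) = 1) :
    nu (lamb n (n + 1) l k) = 1 ↔ Even (l i - n) := by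
  rw [nu_lamb_eq_one_iff hn hl] at hi ⊢
  obtain ⟨hlast, hpre, hsuf⟩ := hi
  refine ⟨fun h => h.2.1 i (by omega), fun heven => ⟨?_, fun j hj => ?_, fun j hj => ?_⟩⟩
  · exact hlast.trans (lamb_le_lamb_of_val_eq_succ hl hik _)
  · rcases Nat.lt_or_ge j i with hji | hji
    · exact hpre j hji
    · rwa [show j = i from Fin.ext (by omega)]
  · exact hsuf j (by omega)

lemma nu_lamb_pred_eq_one (hn : 2 ≤ n) (hl : Antitone l) {i k : Fin n}
    (hik : (k : ℕ) = i + 1) (hk : (k : ℕ) < n - 1) (hk1 : nu (lamb n (n + 1) l k) = 1)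
    (hodd : ¬Even (l k - n)) :
    nu (lamb n (n + 1) l i) = 1 := by
  rw [nu_lamb_eq_one_iff_of_lt hn hl hk] at hk1
  rw [nu_lamb_eq_one_iff_of_lt hn hl (by omega)]
  obtain ⟨hlast, hpre, hsuf⟩ := hk1
  refine ⟨hlast, fun j hj => hpre j (by omega), fun j hj => ?_⟩
  rcases Nat.lt_or_ge (k : ℕ) j with hkj | hkj
  · exact hsuf j hkj
  · rw [show j = k from Fin.ext (by omega)]
    exact Int.even_sub_one.2 hodd

end TwistedWeights

section Cases

variable {n : ℕ} {l : Fin n → ℤ}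

lemma exists_ne_nu_lamb_eq_one (hn : 2 ≤ n) (hl : Antitone l) {i : Fin n} (h0 : 0 < (i : ℕ))
    (h1 : (i : ℕ) < n - 1) (hi : nu (lamb n (n + 1) l i) = 1) :
    ∃ j, j ≠ i ∧ nu (lamb n (n + 1) l j) = 1 := by
  by_cases heven : Even (l i - n)
  · exact ⟨⟨i + 1, by omega⟩, fun h => by simp [Fin.ext_iff] at h,
      (nu_lamb_succ_eq_one_iff hn hl rfl hi).2 heven⟩
  · exact ⟨⟨i - 1, by omega⟩, fun h => by simp [Fin.ext_iff] at h; omega,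
      nu_lamb_pred_eq_one hn hl (by simp only; omega) h1 hi heven⟩

lemma caseA_or_caseB_of_mlam_ne_zero (hn : 2 ≤ n) (hl : Antitone l) (h : mlam n l ≠ 0) :
    caseA n hn l ∨ caseB n hn l := by
  obtain ⟨i, hi, hother⟩ := exists_support_eq_singleton_of_altSum_ne_zero
    (f := fun i => nu (lamb n (n + 1) l i)) (fun i => nu_eq_zero_or_one _)
    (fun _ _ => val_eq_succ_of_nu_lamb_eq_one hn hl) h
  have hend : (i : ℕ) = n - 1 ∨ (i : ℕ) = 0 := by
    by_contra! hmid
    obtain ⟨j, hji, hj⟩ := exists_ne_nu_lamb_eq_one hn hl (by omega) (by omega) hi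
    exact absurd hj (by simp [hother j hji])
  rcases hend with hlast | hfirst
  · have hi' : i = ⟨n - 1, Nat.sub_one_lt_of_lt hn⟩ := Fin.ext hlast
    exact Or.inl ⟨hi' ▸ hi, fun j hj => hother j (by simp [hi', Fin.ext_iff]; omega)⟩
  · have hi' : i = ⟨0, by omega⟩ := Fin.ext hfirst
    exact Or.inr ⟨hi' ▸ hi, fun j hj => hother j (by simp [hi', Fin.ext_iff]; omega)⟩

lemma mlam_of_caseA (hn : 2 ≤ n) (h : caseA n hn l) : mlam n l = 1 :=
  (altSum_eq_of_support_eq_singleton _ (i := ⟨n - 1, Nat.sub_one_lt_of_lt hn⟩) h.1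
    fun j hj => h.2 j (by simp [Fin.ext_iff] at hj; omega)).trans (by simp)

lemma mlam_of_caseB (hn : 2 ≤ n) (h : caseB n hn l) : mlam n l = (-1) ^ (n - 1) :=
  altSum_eq_of_support_eq_singleton _ (i := ⟨0, by omega⟩) h.1
    fun j hj => h.2 j (by simp [Fin.ext_iff] at hj; omega)

lemma caseA_iff_nu_lamb (hn : 2 ≤ n) (hl : Antitone l) :
    caseA n hn l ↔ nu (lamb n (n + 1) l ⟨n - 1, Nat.sub_one_lt_of_lt hn⟩) = 1 ∧
      nu (lamb n (n + 1) l ⟨n - 2, Nat.sub_lt_self two_pos hn⟩) ≠ 1 := by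
  refine ⟨fun h => ⟨h.1, by simp [h.2 ⟨n - 2, _⟩ (show n - 2 < n - 1 by omega)]⟩,
    fun ⟨h1, h2⟩ =>
      ⟨h1, fun j hj => (nu_eq_zero_or_one _).resolve_right fun hj1 => h2 ?_⟩⟩
  have := val_eq_succ_of_nu_lamb_eq_one hn hl (Fin.lt_def.2 hj) hj1 h1
  rwa [show j = ⟨n - 2, Nat.sub_lt_self two_pos hn⟩ from
    Fin.ext (show (j : ℕ) = n - 2 by simp only at this; omega)] at hj1

lemma caseB_iff_nu_lamb (hn : 2 ≤ n) (hl : Antitone l) :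
    caseB n hn l ↔ nu (lamb n (n + 1) l ⟨0, by omega⟩) = 1 ∧
      nu (lamb n (n + 1) l ⟨1, by omega⟩) ≠ 1 := by
  refine ⟨fun h => ⟨h.1, by simp [h.2 ⟨1, by omega⟩ Nat.one_pos]⟩,
    fun ⟨h0, h1⟩ =>
      ⟨h0, fun j hj => (nu_eq_zero_or_one _).resolve_right fun hj1 => h1 ?_⟩⟩
  have := val_eq_succ_of_nu_lamb_eq_one hn hl (Fin.lt_def.2 hj) h0 hj1
  rwa [show j = ⟨1, by omega⟩ from Fin.ext this] at hj1

lemma caseA_iff (hn : 2 ≤ n) (hl : Antitone l) :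
    caseA n hn l ↔
      (n : ℤ) ≤ l ⟨n - 2, Nat.sub_lt_self two_pos hn⟩ ∧
        (∀ i : Fin n, (i : ℕ) < n - 1 → Even (l i - n)) ∧
        (l ⟨n - 1, Nat.sub_one_lt_of_lt hn⟩ ≤ (n : ℤ) - 1 ∨
          Even (l ⟨n - 1, Nat.sub_one_lt_of_lt hn⟩ - n)) := by
  have hsuf : (∀ j : Fin n, n - 2 < (j : ℕ) → Even (l j - n - 1)) ↔
      Even (l ⟨n - 1, Nat.sub_one_lt_of_lt hn⟩ - n - 1) :=
    ⟨fun h => h _ (by simp only; omega),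
      fun h j hj => by rwa [show j = ⟨n - 1, _⟩ from Fin.ext (by simp only; omega)]⟩
  rw [caseA_iff_nu_lamb hn hl, nu_lamb_last_eq_one_iff hn hl, ne_eq,
    nu_lamb_eq_one_iff_of_lt hn hl (by simp only; omega)]
  rw [hsuf, Int.even_sub_one]
  constructor
  · rintro ⟨⟨hpen, hpre⟩, hpen1⟩
    refine ⟨hpen, hpre, or_iff_not_imp_right.2 fun hodd => ?_⟩
    have hne : l ⟨n - 1, Nat.sub_one_lt_of_lt hn⟩ ≠ n := fun h => hodd (by simp [h])
    by_contra! hgt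
    exact hpen1 ⟨by omega, fun j hj => hpre j (by omega), hodd⟩
  · rintro ⟨hpen, hpre, hlast⟩
    refine ⟨⟨hpen, hpre⟩, fun ⟨hgt, _, hodd⟩ => ?_⟩
    exact hlast.elim (fun h => by omega) hodd

lemma caseB_iff (hn : 2 ≤ n) (hl : Antitone l) :
    caseB n hn l ↔
      (n : ℤ) + 1 ≤ l ⟨n - 1, Nat.sub_one_lt_of_lt hn⟩ ∧
        ∀ i : Fin n, Even (l i - n - 1) := by
  rw [caseB_iff_nu_lamb hn hl, ne_eq]
  constructor
  · rintro ⟨h0, h1⟩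
    rw [nu_lamb_succ_eq_one_iff hn hl (k := ⟨1, by omega⟩) rfl h0] at h1
    obtain ⟨hlast, -, hsuf⟩ := (nu_lamb_eq_one_iff_of_lt hn hl (by simp only; omega)).1 h0
    refine ⟨hlast, fun j => ?_⟩
    rcases Nat.eq_zero_or_pos j with hj | hj
    · rw [show j = ⟨0, by omega⟩ from Fin.ext hj]
      exact Int.even_sub_one.2 h1
    · exact hsuf j hj
  · rintro ⟨hlast, heven⟩
    have h0 : nu (lamb n (n + 1) l ⟨0, by omega⟩) = 1 :=
      (nu_lamb_eq_one_iff_of_lt hn hl (by simp only; omega)).2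
        ⟨hlast, fun j hj => absurd hj (Nat.not_lt_zero _), fun j _ => heven j⟩
    rw [nu_lamb_succ_eq_one_iff hn hl (k := ⟨1, by omega⟩) rfl h0]
    exact ⟨h0, Int.even_sub_one.1 (heven _)⟩

end Cases

/-- (`n ≥ 2`, `d = 2`, `u = n+1`, with `λ^i`, `ν`, and `m_λ` as above.)
`m_λ ≠ 0` iff either case (a) (`ν_{λ^n} = 1`, all other `ν_{λ^j} = 0`), in which case
`m_λ = 1`, or case (b) (`ν_{λ^1} = 1`, all other `ν_{λ^j} = 0`), in which case
`m_λ = (-1)^{n-1}`.  Moreover case (a) holds iff `λ_{n-1} ≥ n`, `λ_i - n` is even for all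
`i ≤ n-1`, and (`λ_n ≤ n-1` or `λ_n - n` is even); and case (b) holds iff `λ_n ≥ n+1`
and `λ_i - n - 1` is even for all `i`. -/
theorem stmt_11 (n : ℕ) (hn : 2 ≤ n) (l : Fin n → ℤ) (hl : Antitone l) :
    (mlam n l ≠ 0 ↔ (caseA n hn l ∨ caseB n hn l)) ∧
    (caseA n hn l → mlam n l = 1) ∧
    (caseB n hn l → mlam n l = (-1 : ℤ) ^ (n - 1)) ∧
    (caseA n hn l ↔
      ((n : ℤ) ≤ l ⟨n - 2, by omega⟩ ∧
        (∀ i : Fin n, (i : ℕ) < n - 1 → Even (l i - n)) ∧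
        (l ⟨n - 1, by omega⟩ ≤ (n : ℤ) - 1 ∨ Even (l ⟨n - 1, by omega⟩ - n)))) ∧
    (caseB n hn l ↔
      ((n : ℤ) + 1 ≤ l ⟨n - 1, by omega⟩ ∧ ∀ i : Fin n, Even (l i - n - 1))) := by
  refine ⟨⟨caseA_or_caseB_of_mlam_ne_zero hn hl, ?_⟩, mlam_of_caseA hn, mlam_of_caseB hn,
    caseA_iff hn hl, caseB_iff hn hl⟩
  rintro (h | h)
  · simp [mlam_of_caseA hn h]
  · simp [mlam_of_caseB hn h]
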